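/- arXiv:2106.04313 — 4 statements merged into one kernel-verified Lean document; each statement's English description precedes it below -/
import Mathlib

section
/- For every real number $\xi\in(0,\sqrt{7})$ such that $1,\xi,\sqrt{7-\xi^2}$ are linearly independent over $\mathbb{Q}$, the plane $A_\xi\subset\mathbb{R}^4$ spanned by $X^{(1)}_\xi=(0,1,\xi,\sqrt{7-\xi^2})$ and $X^{(2)}_\xi=(1,0,-\sqrt{7-\xi^2},\xi)$ intersects every rational plane of $\mathbb{R}^4$ trivially (i.e. $A_\xi$ is $(2,1)$-irrational). -/
/-!
Let `η = √(7 - ξ²)` and let `q i j` be the Plücker coordinates of the rational rows spanning `B`.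
The plane `A_ξ` meets `B` trivially as soon as the `4 × 4` matrix with rows `X⁽¹⁾, X⁽²⁾` and the
rows of `B` is invertible. Expanding along the first two rows, its determinant is
`(7 q₀₁ - q₂₃) + (q₁₃ - q₀₂) ξ - (q₀₃ + q₁₂) η`. If this vanishes, the `ℚ`-independence of
`1, ξ, η` gives `q₂₃ = 7 q₀₁`, `q₁₃ = q₀₂`, `q₁₂ = -q₀₃`, and the Plücker relation becomes
`q₀₂² + q₀₃² = 7 q₀₁²`. Since `7 ≡ 3 (mod 4)`, this has only the trivial rational solution
(by descent, as `-1` is not a square mod `7`), so all Plücker coordinates vanish, which is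
impossible for a plane.
-/

open Matrix

theorem ZMod.eq_zero_of_sq_add_sq_eq_zero {p : ℕ} [Fact p.Prime] (hp : p % 4 = 3)
    {x y : ZMod p} (h : x ^ 2 + y ^ 2 = 0) : x = 0 := by
  by_contra hx
  exact ZMod.mod_four_ne_three_of_sq_eq_neg_sq hx (eq_neg_of_add_eq_zero_left h) hp

theorem Int.dvd_of_dvd_sq_add_sq {p : ℕ} [Fact p.Prime] (hp : p % 4 = 3) {x y : ℤ}
    (h : (p : ℤ) ∣ x ^ 2 + y ^ 2) : (p : ℤ) ∣ x := by
  rw [← ZMod.intCast_zmod_eq_zero_iff_dvd] at h ⊢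
  push_cast at h
  exact ZMod.eq_zero_of_sq_add_sq_eq_zero hp h

theorem Int.eq_zero_of_sq_add_sq_eq_mul_sq {p : ℕ} [Fact p.Prime] (hp : p % 4 = 3)
    {x y z : ℤ} (h : x ^ 2 + y ^ 2 = p * z ^ 2) : z = 0 := by
  induction hn : z.natAbs using Nat.strong_induction_on generalizing x y z with
  | _ n ih =>
  rcases eq_or_ne z 0 with hz | hz
  · exact hz
  obtain ⟨a, rfl⟩ : (p : ℤ) ∣ x := Int.dvd_of_dvd_sq_add_sq hp ⟨_, h⟩
  obtain ⟨b, rfl⟩ : (p : ℤ) ∣ y := Int.dvd_of_dvd_sq_add_sq hp ⟨_, (add_comm _ _).trans h⟩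
  have hp0 : (p : ℤ) ≠ 0 := by exact_mod_cast (Fact.out : p.Prime).ne_zero
  have hz2 : z ^ 2 = p * (a ^ 2 + b ^ 2) :=
    mul_left_cancel₀ hp0 (by linear_combination -h)
  obtain ⟨c, rfl⟩ : (p : ℤ) ∣ z :=
    (Nat.prime_iff_prime_int.mp Fact.out).dvd_of_dvd_pow ⟨_, hz2⟩
  have hc : a ^ 2 + b ^ 2 = p * c ^ 2 :=
    mul_left_cancel₀ hp0 (by linear_combination -hz2)
  have hlt : c.natAbs < n := by
    rw [← hn, Int.natAbs_mul, Int.natAbs_natCast]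
    exact lt_mul_left (Int.natAbs_pos.mpr (right_ne_zero_of_mul hz)) (Fact.out : p.Prime).one_lt
  rw [ih _ hlt hc rfl, mul_zero]

theorem Rat.sq_add_sq_ne_prime {p : ℕ} [Fact p.Prime] (hp : p % 4 = 3) (a b : ℚ) :
    a ^ 2 + b ^ 2 ≠ p := by
  intro h
  have hden : ((a.num * b.den) ^ 2 + (b.num * a.den) ^ 2 : ℚ) = p * (a.den * b.den) ^ 2 := by
    rw [← Rat.mul_den_eq_num, ← Rat.mul_den_eq_num, ← h]
    ring
  have := Int.eq_zero_of_sq_add_sq_eq_mul_sq hp (x := a.num * b.den) (y := b.num * a.den)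
    (z := a.den * b.den) (by exact_mod_cast hden)
  simp at this

def plucker {R ι : Type*} [CommRing R] (u : Fin 2 → ι → R) (i j : ι) : R :=
  u 0 i * u 1 j - u 0 j * u 1 i

section Plucker

variable {R : Type*} [CommRing R]

theorem plucker_map {S ι : Type*} [CommRing S] (f : R →+* S) (u : Fin 2 → ι → R) (i j : ι) :
    plucker (fun k l => f (u k l)) i j = f (plucker u i j) := by
  simp [plucker]

theorem plucker_self {ι : Type*} (u : Fin 2 → ι → R) (i : ι) : plucker u i i = 0 := by
  simp [plucker]

theorem plucker_swap {ι : Type*} (u : Fin 2 → ι → R) (i j : ι) :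
    plucker u j i = -plucker u i j := by
  simp only [plucker]
  ring

theorem plucker_eq_zero_of_forall_lt {ι : Type*} [LinearOrder ι] {u : Fin 2 → ι → R}
    (h : ∀ i j, i < j → plucker u i j = 0) (i j : ι) : plucker u i j = 0 := by
  rcases lt_trichotomy i j with hij | rfl | hij
  · exact h i j hij
  · exact plucker_self u i
  · rw [plucker_swap, h j i hij, neg_zero]

theorem plucker_relation (u : Fin 2 → Fin 4 → R) :
    plucker u 0 1 * plucker u 2 3 - plucker u 0 2 * plucker u 1 3
      + plucker u 0 3 * plucker u 1 2 = 0 := by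
  simp only [plucker]
  ring

theorem det_of_append_eq_plucker (u w : Fin 2 → Fin 4 → R) :
    (of (Fin.append u w)).det =
      plucker u 0 1 * plucker w 2 3 - plucker u 0 2 * plucker w 1 3
        + plucker u 0 3 * plucker w 1 2 + plucker u 1 2 * plucker w 0 3
        - plucker u 1 3 * plucker w 0 2 + plucker u 2 3 * plucker w 0 1 := by
  have h : Fin.append u w = ![u 0, u 1, w 0, w 1] := by
    funext i
    fin_cases i <;> rfl
  rw [h, det_succ_row_zero, Fin.sum_univ_four]
  simp only [Nat.reduceAdd, Nat.succ_eq_add_one, Fin.isValue, Fin.coe_ofNat_eq_mod, Nat.zero_mod,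
    pow_zero, of_apply, cons_val', cons_val_fin_one, cons_val_zero, one_mul, Fin.succAbove_zero,
    det_fin_three, submatrix_apply, Fin.succ_zero_eq_one, cons_val_one, Fin.succ_one_eq_two,
    cons_val, Fin.reduceSucc, Nat.one_mod, pow_one, neg_mul, Fin.succAbove, Fin.castSucc_zero,
    zero_lt_one, ↓reduceIte, Fin.castSucc_one, lt_self_iff_false, Fin.reduceCastSucc,
    Fin.lt_one_iff, Fin.reduceEq, Nat.reduceMod, even_two, Even.neg_pow, one_pow, Fin.reduceLT,
    Nat.mod_succ, plucker]
  ring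

end Plucker

theorem LinearIndependent.exists_plucker_ne_zero {K ι : Type*} [Field K] {u : Fin 2 → ι → K}
    (hu : LinearIndependent K u) : ∃ i j, plucker u i j ≠ 0 := by
  by_contra! h
  obtain ⟨k, hk⟩ : ∃ k, u 0 k ≠ 0 := by
    by_contra! h0
    exact hu.ne_zero 0 (funext h0)
  have hdep : ∑ l, ![-u 1 k, u 0 k] l • u l = 0 := by
    funext i
    simpa [plucker, mul_comm, neg_add_eq_sub] using h k i
  exact hk (Fintype.linearIndependent_iff.mp hu _ hdep 1)

theorem disjoint_span_range_of_det_append_ne_zero {K : Type*} [Field K] {m n : ℕ}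
    (u : Fin m → Fin (m + n) → K) (w : Fin n → Fin (m + n) → K)
    (h : (of (Fin.append u w)).det ≠ 0) :
    Disjoint (Submodule.span K (Set.range u)) (Submodule.span K (Set.range w)) := by
  have hli : LinearIndependent K (Fin.append u w ∘ finSumFinEquiv) :=
    (linearIndependent_rows_of_det_ne_zero h).comp _ finSumFinEquiv.injective
  simpa [Function.comp_def] using (linearIndependent_sum.mp hli).2.2

/-- The Plücker coordinates of the first block are `(-1, -ξ, -η, -η, ξ, ξ ^ 2 + η ^ 2)`. -/
theorem det_append_A_xi {ξ η : ℝ} (hη : ξ ^ 2 + η ^ 2 = 7) (w : Fin 2 → Fin 4 → ℚ) :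
    (of (Fin.append ![![0, 1, ξ, η], ![1, 0, -η, ξ]] fun k l => (w k l : ℝ))).det =
      ((7 * plucker w 0 1 - plucker w 2 3 : ℚ) : ℝ) + ((plucker w 1 3 - plucker w 0 2 : ℚ) : ℝ) * ξ
        + ((-(plucker w 0 3 + plucker w 1 2) : ℚ) : ℝ) * η := by
  rw [det_of_append_eq_plucker]
  simp only [plucker, Fin.isValue, cons_val', cons_val_zero, cons_val_one, cons_val,
    cons_val_fin_one]
  push_cast
  linear_combination ((w 0 0 : ℝ) * w 1 1 - w 0 1 * w 1 0) * hη

theorem plucker_eq_zero_of_pairing_eq_zero {ξ η : ℝ}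
    (hindep : ∀ a b c : ℚ, (a : ℝ) + (b : ℝ) * ξ + (c : ℝ) * η = 0 → a = 0 ∧ b = 0 ∧ c = 0)
    (w : Fin 2 → Fin 4 → ℚ)
    (h : ((7 * plucker w 0 1 - plucker w 2 3 : ℚ) : ℝ)
      + ((plucker w 1 3 - plucker w 0 2 : ℚ) : ℝ) * ξ
      + ((-(plucker w 0 3 + plucker w 1 2) : ℚ) : ℝ) * η = 0) (i j : Fin 4) :
    plucker w i j = 0 := by
  obtain ⟨h23, h13, h12⟩ := hindep _ _ _ h
  have hsq : plucker w 0 2 ^ 2 + plucker w 0 3 ^ 2 = 7 * plucker w 0 1 ^ 2 := by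
    linear_combination -plucker_relation w - plucker w 0 1 * h23 - plucker w 0 2 * h13
      - plucker w 0 3 * h12
  have h01 : plucker w 0 1 = 0 := by
    by_contra h01
    have : Fact (Nat.Prime 7) := ⟨Nat.prime_seven⟩
    refine Rat.sq_add_sq_ne_prime (p := 7) (by norm_num) (plucker w 0 2 / plucker w 0 1)
      (plucker w 0 3 / plucker w 0 1) ?_
    field_simp
    linear_combination hsq
  have h02 : plucker w 0 2 = 0 := by nlinarith
  have h03 : plucker w 0 3 = 0 := by nlinarith
  refine plucker_eq_zero_of_forall_lt (fun i j hij => ?_) i j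
  fin_cases i <;> fin_cases j <;> simp only [Fin.zero_eta, Fin.mk_one, Fin.reduceFinMk] at hij ⊢
    <;> first | exact absurd hij (by decide) | linarith

theorem A_xi_is_two_one_irrational_general (ξ : ℝ)
    (hindep : ∀ a b c : ℚ,
      (a : ℝ) + (b : ℝ) * ξ + (c : ℝ) * Real.sqrt (7 - ξ ^ 2) = 0 →
        a = 0 ∧ b = 0 ∧ c = 0)
    (B : Submodule ℝ (Fin 4 → ℝ))
    (hrat : ∃ W : Fin 2 → Fin 4 → ℚ,
      B = Submodule.span ℝ (Set.range fun j => fun i => (W j i : ℝ)))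
    (hdim : Module.finrank ℝ B = 2) :
    Submodule.span ℝ
        {![(0:ℝ), 1, ξ, Real.sqrt (7 - ξ ^ 2)],
          ![(1:ℝ), 0, -Real.sqrt (7 - ξ ^ 2), ξ]} ⊓ B = ⊥ := by
  obtain ⟨W, rfl⟩ := hrat
  set η := Real.sqrt (7 - ξ ^ 2)
  have hη : ξ ^ 2 + η ^ 2 = 7 := by
    have hη0 : η ≠ 0 := fun h => by simpa [h] using hindep 0 0 1
    rw [Real.sq_sqrt (Real.sqrt_ne_zero'.mp hη0).le]
    ring
  have hW : LinearIndependent ℝ fun k l => (W k l : ℝ) := by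
    rw [linearIndependent_iff_card_eq_finrank_span, Set.finrank, hdim, Fintype.card_fin]
  obtain ⟨i, j, hij⟩ := hW.exists_plucker_ne_zero
  have hdet : (of (Fin.append ![![0, 1, ξ, η], ![1, 0, -η, ξ]]
      fun k l => (W k l : ℝ))).det ≠ 0 := by
    rw [det_append_A_xi hη]
    intro h
    apply hij
    rw [← Rat.coe_castHom, plucker_map, plucker_eq_zero_of_pairing_eq_zero hindep W h i j,
      map_zero]
  rw [← Matrix.range_cons_cons_empty _ _ ![], ← disjoint_iff]
  exact disjoint_span_range_of_det_append_ne_zero _ _ hdet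

/-- For `ξ ∈ (0, √7)` such that `1, ξ, √(7 - ξ²)` are linearly independent over `ℚ`,
the plane `A_ξ ⊂ ℝ⁴` spanned by `(0,1,ξ,√(7-ξ²))` and `(1,0,-√(7-ξ²),ξ)` intersects
every rational plane of `ℝ⁴` trivially, i.e. `A_ξ` is `(2,1)`-irrational. -/
theorem A_xi_is_two_one_irrational (ξ : ℝ) (h0 : 0 < ξ) (h7 : ξ < Real.sqrt 7)
    (hindep : ∀ a b c : ℚ,
      (a : ℝ) + (b : ℝ) * ξ + (c : ℝ) * Real.sqrt (7 - ξ ^ 2) = 0 →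
        a = 0 ∧ b = 0 ∧ c = 0)
    (B : Submodule ℝ (Fin 4 → ℝ))
    (hrat : ∃ W : Fin 2 → Fin 4 → ℚ,
      B = Submodule.span ℝ (Set.range fun j => fun i => (W j i : ℝ)))
    (hdim : Module.finrank ℝ B = 2) :
    Submodule.span ℝ
        {![(0:ℝ), 1, ξ, Real.sqrt (7 - ξ ^ 2)],
          ![(1:ℝ), 0, -Real.sqrt (7 - ξ ^ 2), ξ]} ⊓ B = ⊥ :=
  A_xi_is_two_one_irrational_general ξ hindep B hrat hdim
end

section
/- Let $D$ and $E$ be subspaces of $\mathbb{R}^n$ both of dimension $k$. Then there exist lines $D_1,\ldots,D_k\subset D$ and $E_1,\ldots,E_k\subset E$ with $D=D_1\oplus\cdots\oplus D_k$ and $E=E_1\oplus\cdots\oplus E_k$ such that $\psi_k(D,E)\le \sum_{i=1}^k\psi_1(D_i,E_i)\le k\,\psi_k(D,E)$. -/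
/-! Take for the lines the spans of the principal vectors `Xᵢ`, `Yᵢ`. Then `ψ₁(Dᵢ,Eᵢ) = sin θᵢ`, and
since the `sin θᵢ` are nonnegative with largest term `sin θ_k`, their sum lies between `sin θ_k`
and `k sin θ_k`. -/

/-- `θ` is the family of canonical angles between the `k`-dimensional subspaces
`D`, `E` of `ℝⁿ`: there are orthonormal bases `(X₁,…,X_k)` of `D` and
`(Y₁,…,Y_k)` of `E` with `Xᵢ · Yⱼ = δᵢⱼ cos θᵢ`, and `ψ_i(D,E) = sin θᵢ`
is nondecreasing in `i`. -/
def CanonicalAnglesSq (n k : ℕ) (D E : Submodule ℝ (EuclideanSpace ℝ (Fin n)))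
    (θ : Fin k → ℝ) : Prop :=
  Module.finrank ℝ D = k ∧ Module.finrank ℝ E = k ∧
  Monotone θ ∧ (∀ i, θ i ∈ Set.Icc 0 (Real.pi / 2)) ∧
  ∃ (X : Fin k → EuclideanSpace ℝ (Fin n)) (Y : Fin k → EuclideanSpace ℝ (Fin n)),
    Orthonormal ℝ X ∧ Orthonormal ℝ Y ∧
    Submodule.span ℝ (Set.range X) = D ∧ Submodule.span ℝ (Set.range Y) = E ∧
    ∀ i j : Fin k,
      (inner ℝ (X i) (Y j) : ℝ) = if i = j then Real.cos (θ i) else 0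

open InnerProductGeometry

theorem InnerProductGeometry.angle_eq_of_inner_eq_cos {V : Type*} [NormedAddCommGroup V]
    [InnerProductSpace ℝ V] {x y : V} (hx : ‖x‖ = 1) (hy : ‖y‖ = 1) {t : ℝ}
    (h : inner ℝ x y = Real.cos t) (ht : t ∈ Set.Icc 0 Real.pi) : angle x y = t := by
  rw [angle, h, hx, hy, mul_one, div_one, Real.arccos_cos ht.1 ht.2]

theorem Fintype.apply_le_sum_le_card_mul {ι : Type*} [Fintype ι] {f : ι → ℝ} (hf : ∀ i, 0 ≤ f i)
    {m : ι} (hm : ∀ i, f i ≤ f m) : f m ≤ ∑ i, f i ∧ ∑ i, f i ≤ Fintype.card ι * f m := by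
  refine ⟨Finset.single_le_sum (fun i _ => hf i) (Finset.mem_univ m), ?_⟩
  simpa using Finset.sum_le_card_nsmul Finset.univ f (f m) fun i _ => hm i

theorem Real.sin_le_sin_of_mem_Icc_of_le {x y : ℝ} (hx : x ∈ Set.Icc 0 (Real.pi / 2))
    (hy : y ∈ Set.Icc 0 (Real.pi / 2)) (hxy : x ≤ y) : Real.sin x ≤ Real.sin y :=
  Real.sin_le_sin_of_le_of_le_pi_div_two (by linarith [hx.1, Real.pi_pos]) hy.2 hxy

theorem Real.sin_nonneg_of_mem_Icc_zero_pi_div_two {x : ℝ} (hx : x ∈ Set.Icc 0 (Real.pi / 2)) :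
    0 ≤ Real.sin x :=
  Real.sin_nonneg_of_nonneg_of_le_pi hx.1 (by linarith [hx.2, Real.pi_pos])

/-- Let `D`, `E` be `k`-dimensional subspaces of `ℝⁿ`.  There are lines
`D₁,…,D_k` (spanned by `u₁,…,u_k`) with `D = D₁ ⊕ ⋯ ⊕ D_k` and lines
`E₁,…,E_k` (spanned by `v₁,…,v_k`) with `E = E₁ ⊕ ⋯ ⊕ E_k` such that
`ψ_k(D,E) ≤ ∑ᵢ ψ₁(Dᵢ,Eᵢ) ≤ k ψ_k(D,E)`, where `ψ₁(Dᵢ,Eᵢ) = sin (uᵢ, vᵢ)̂`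
and `ψ_k(D,E) = sin θ_k` is the sine of the largest canonical angle. -/
theorem exists_lines_decomposition (n k : ℕ) (hk : 1 ≤ k)
    (D E : Submodule ℝ (EuclideanSpace ℝ (Fin n)))
    (θ : Fin k → ℝ) (hθ : CanonicalAnglesSq n k D E θ) :
    ∃ (u v : Fin k → EuclideanSpace ℝ (Fin n)),
      (∀ i, u i ≠ 0) ∧ (∀ i, v i ≠ 0) ∧
      LinearIndependent ℝ u ∧ LinearIndependent ℝ v ∧
      Submodule.span ℝ (Set.range u) = D ∧ Submodule.span ℝ (Set.range v) = E ∧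
      Real.sin (θ ⟨k - 1, by omega⟩) ≤
        ∑ i, Real.sin (InnerProductGeometry.angle (u i) (v i)) ∧
      ∑ i, Real.sin (InnerProductGeometry.angle (u i) (v i)) ≤
        (k : ℝ) * Real.sin (θ ⟨k - 1, by omega⟩) := by
  obtain ⟨-, -, hmono, hθ_mem, X, Y, hX, hY, hXD, hYE, hinner⟩ := hθ
  have hangle (i : Fin k) : angle (X i) (Y i) = θ i :=
    angle_eq_of_inner_eq_cos (hX.1 i) (hY.1 i) (by simp [hinner])
      ⟨(hθ_mem i).1, by linarith [(hθ_mem i).2, Real.pi_pos]⟩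
  have hsin_le (i : Fin k) : Real.sin (θ i) ≤ Real.sin (θ ⟨k - 1, by omega⟩) :=
    Real.sin_le_sin_of_mem_Icc_of_le (hθ_mem i) (hθ_mem _)
      (hmono (Fin.le_def.2 (Nat.le_sub_one_of_lt i.isLt)))
  have hbounds := Fintype.apply_le_sum_le_card_mul
    (fun i => Real.sin_nonneg_of_mem_Icc_zero_pi_div_two (hθ_mem i)) hsin_le
  refine ⟨X, Y, hX.ne_zero, hY.ne_zero, hX.linearIndependent, hY.linearIndependent, hXD, hYE, ?_⟩
  simpa [hangle] using hbounds
end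

section
/- Let $n\ge 4$ and let $F_1,\ldots,F_\ell,B_1,\ldots,B_\ell$ be subspaces of $\mathbb{R}^n$ with $\dim F_i=\dim B_i=d_i$ for each $i$, such that the $F_i$ span a subspace of dimension $k=d_1+\cdots+d_\ell$ and likewise the $B_i$. Set $F=F_1\oplus\cdots\oplus F_\ell$ and $B=B_1\oplus\cdots\oplus B_\ell$. Then there is a constant $c>0$ depending only on $F_1,\ldots,F_\ell$ and $n$ such that $\psi_k(F,B)\le c\sum_{i=1}^\ell \psi_{d_i}(F_i,B_i)$. -/
open Real Finset

section OrthonormalPairs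

variable {ι E : Type*} [Fintype ι] [DecidableEq ι] [NormedAddCommGroup E] [InnerProductSpace ℝ E]
  {X Y : ι → E} {c : ι → ℝ}

theorem inner_sum_smul_of_inner_eq_ite (h : ∀ i j, inner ℝ (X i) (Y j) = if i = j then c i else 0)
    (i : ι) (b : ι → ℝ) : inner ℝ (X i) (∑ j, b j • Y j) = b i * c i := by
  simp [inner_sum, real_inner_smul_right, h]

theorem sum_smul_inner_sum_smul_of_inner_eq_ite
    (h : ∀ i j, inner ℝ (X i) (Y j) = if i = j then c i else 0) (a b : ι → ℝ) :
    inner ℝ (∑ i, a i • X i) (∑ j, b j • Y j) = ∑ i, a i * (b i * c i) := by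
  simp [sum_inner, real_inner_smul_left, inner_sum_smul_of_inner_eq_ite h]

theorem Orthonormal.norm_sum_smul_sq (hX : Orthonormal ℝ X) (a : ι → ℝ) :
    ‖∑ i, a i • X i‖ ^ 2 = ∑ i, a i ^ 2 := by
  rw [← real_inner_self_eq_norm_sq,
    sum_smul_inner_sum_smul_of_inner_eq_ite (orthonormal_iff_ite.mp hX)]
  simp [sq]

end OrthonormalPairs

namespace Submodule

variable {ι R M : Type*} [Fintype ι]

def piSum [Semiring R] [AddCommMonoid M] [Module R M] (p : ι → Submodule R M) :
    ((i : ι) → p i) →ₗ[R] M :=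
  ∑ i, (p i).subtype ∘ₗ LinearMap.proj i

@[simp]
theorem piSum_apply [Semiring R] [AddCommMonoid M] [Module R M] (p : ι → Submodule R M)
    (f : (i : ι) → p i) : piSum p f = ∑ i, (f i : M) := by
  simp [piSum]

theorem range_piSum [Semiring R] [AddCommMonoid M] [Module R M] (p : ι → Submodule R M) :
    LinearMap.range (piSum p) = ⨆ i, p i := by
  classical
  refine le_antisymm ?_ (iSup_le fun i x hx => ⟨Pi.single i ⟨x, hx⟩, ?_⟩)
  · rintro _ ⟨f, rfl⟩
    rw [piSum_apply]
    exact sum_mem fun i _ => mem_iSup_of_mem i (f i).2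
  · rw [piSum_apply, Finset.sum_eq_single i (fun j _ hj => by simp [Pi.single_eq_of_ne hj])
      (by simp)]
    simp

theorem injective_piSum_of_finrank_iSup [DivisionRing R] [AddCommGroup M] [Module R M]
    [FiniteDimensional R M] {p : ι → Submodule R M}
    (hp : Module.finrank R ↥(⨆ i, p i) = ∑ i, Module.finrank R (p i)) :
    Function.Injective (piSum p) := by
  have := LinearMap.finrank_range_add_finrank_ker (piSum p)
  rw [range_piSum, hp, Module.finrank_pi_fintype, add_eq_left, finrank_eq_zero] at this
  exact LinearMap.ker_eq_bot.mp this

theorem exists_decomposition_norm_le_of_finrank_iSup {E : Type*} [NormedAddCommGroup E]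
    [NormedSpace ℝ E] [FiniteDimensional ℝ E] {p : ι → Submodule ℝ E}
    (hp : Module.finrank ℝ ↥(⨆ i, p i) = ∑ i, Module.finrank ℝ (p i)) :
    ∃ C > 0, ∀ x ∈ ⨆ i, p i,
      ∃ f : (i : ι) → p i, ∑ i, (f i : E) = x ∧ ∀ i, ‖(f i : E)‖ ≤ C * ‖x‖ := by
  obtain ⟨K, hK, hanti⟩ :=
    (piSum p).injective_iff_antilipschitz.mp (injective_piSum_of_finrank_iSup hp)
  refine ⟨K, hK, fun x hx => ?_⟩
  obtain ⟨f, rfl⟩ := LinearMap.mem_range.mp ((range_piSum p).symm ▸ hx)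
  refine ⟨f, (piSum_apply p f).symm, fun i => ?_⟩
  calc ‖(f i : E)‖ = ‖f i‖ := rfl
    _ ≤ ‖f‖ := norm_le_pi_norm f i
    _ ≤ K * ‖piSum p f‖ := ZeroHomClass.bound_of_antilipschitz _ hanti f

end Submodule

namespace CanonicalAnglesSq

variable {n k : ℕ} {D E : Submodule ℝ (EuclideanSpace ℝ (Fin n))} {θ : Fin k → ℝ}

theorem sin_nonneg (h : CanonicalAnglesSq n k D E θ) (i : Fin k) : 0 ≤ sin (θ i) :=
  sin_nonneg_of_nonneg_of_le_pi (h.2.2.2.1 i).1 ((h.2.2.2.1 i).2.trans (by linarith [pi_pos]))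

theorem sin_le_sin_last (h : CanonicalAnglesSq n k D E θ) (hk : 0 < k) (i : Fin k) :
    sin (θ i) ≤ sin (θ ⟨k - 1, by omega⟩) := by
  have hθ := h.2.2.2.1
  exact sin_le_sin_of_le_of_le_pi_div_two (by linarith [(hθ i).1, pi_pos])
    (hθ ⟨k - 1, by omega⟩).2 (h.2.2.1 (Fin.le_def.mpr (Nat.le_sub_one_of_lt i.isLt)))

theorem exists_mem_norm_sub_le (h : CanonicalAnglesSq n k D E θ) (hk : 0 < k)
    {x : EuclideanSpace ℝ (Fin n)} (hx : x ∈ D) :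
    ∃ y ∈ E, ‖x - y‖ ≤ sin (θ ⟨k - 1, by omega⟩) * ‖x‖ := by
  obtain ⟨X, Y, hX, hY, rfl, rfl, hXY⟩ := h.2.2.2.2
  obtain ⟨a, rfl⟩ := Submodule.mem_span_range_iff_exists_fun ℝ |>.mp hx
  set s := sin (θ ⟨k - 1, by omega⟩)
  -- the projection of `x = ∑ aⱼ Xⱼ` onto `E`, at distance `(∑ aⱼ² sin² θⱼ)^{1/2}` from `x`
  refine ⟨∑ j, (a j * cos (θ j)) • Y j,
    Submodule.sum_mem _ fun j _ => Submodule.smul_mem _ _ (Submodule.subset_span ⟨j, rfl⟩), ?_⟩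
  have hdist : ‖∑ j, a j • X j - ∑ j, (a j * cos (θ j)) • Y j‖ ^ 2
      = ∑ j, a j ^ 2 * sin (θ j) ^ 2 := by
    rw [norm_sub_sq_real, hX.norm_sum_smul_sq, hY.norm_sum_smul_sq,
      sum_smul_inner_sum_smul_of_inner_eq_ite hXY, mul_sum, ← sum_sub_distrib, ← sum_add_distrib]
    refine sum_congr rfl fun j _ => ?_
    rw [sin_sq]
    ring
  have hbound : ∑ j, a j ^ 2 * sin (θ j) ^ 2 ≤ (s * ‖∑ j, a j • X j‖) ^ 2 := by
    rw [mul_pow, hX.norm_sum_smul_sq, mul_sum]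
    refine sum_le_sum fun j _ => ?_
    rw [mul_comm]
    gcongr
    · exact h.sin_nonneg j
    · exact h.sin_le_sin_last hk j
  have hs : 0 ≤ s * ‖∑ j, a j • X j‖ := mul_nonneg (h.sin_nonneg _) (norm_nonneg _)
  exact (pow_le_pow_iff_left₀ (norm_nonneg _) hs two_ne_zero).mp (hdist ▸ hbound)

theorem exists_norm_eq_one_forall_le_norm_sub (h : CanonicalAnglesSq n k D E θ) (hk : 0 < k) :
    ∃ x ∈ D, ‖x‖ = 1 ∧ ∀ y ∈ E, sin (θ ⟨k - 1, by omega⟩) ≤ ‖x - y‖ := by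
  set m : Fin k := ⟨k - 1, by omega⟩
  obtain ⟨X, Y, hX, hY, rfl, rfl, hXY⟩ := h.2.2.2.2
  refine ⟨X m, Submodule.subset_span ⟨m, rfl⟩, hX.1 m, fun y hy => ?_⟩
  obtain ⟨b, rfl⟩ := Submodule.mem_span_range_iff_exists_fun ℝ |>.mp hy
  have hdist : ‖X m - ∑ j, b j • Y j‖ ^ 2 = 1 - 2 * (b m * cos (θ m)) + ∑ j, b j ^ 2 := by
    rw [norm_sub_sq_real, hX.1 m, hY.norm_sum_smul_sq, inner_sum_smul_of_inner_eq_ite hXY]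
    ring
  have hbm : b m ^ 2 ≤ ∑ j, b j ^ 2 :=
    single_le_sum (f := fun j => b j ^ 2) (fun j _ => sq_nonneg _) (mem_univ m)
  -- `1 - 2 bₘ cos θₘ + bₘ² = sin² θₘ + (bₘ - cos θₘ)²`
  have hsq : sin (θ m) ^ 2 ≤ ‖X m - ∑ j, b j • Y j‖ ^ 2 := by
    nlinarith [sin_sq_add_cos_sq (θ m), sq_nonneg (b m - cos (θ m))]
  exact (pow_le_pow_iff_left₀ (h.sin_nonneg m) (norm_nonneg _) two_ne_zero).mp hsq

end CanonicalAnglesSq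

/-- Let `n ≥ 4` and `F₁,…,F_ℓ` be subspaces of `ℝⁿ`, `dim Fᵢ = dᵢ`, spanning a
subspace `F = F₁ ⊕ ⋯ ⊕ F_ℓ` of dimension `k = d₁ + ⋯ + d_ℓ`.  There is a
constant `c > 0` (depending only on the `Fᵢ` and `n`) such that for all
subspaces `B₁,…,B_ℓ` with `dim Bᵢ = dᵢ` spanning `B = B₁ ⊕ ⋯ ⊕ B_ℓ` of
dimension `k`, one has `ψ_k(F,B) ≤ c ∑ᵢ ψ_{dᵢ}(Fᵢ,Bᵢ)` (sines of largest
canonical angles). -/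
theorem psi_of_direct_sum_le (n ℓ : ℕ)
    (d : Fin ℓ → ℕ) (hd : ∀ i, 1 ≤ d i) (hk : 0 < ∑ i, d i)
    (F : Fin ℓ → Submodule ℝ (EuclideanSpace ℝ (Fin n)))
    (hFdim : ∀ i, Module.finrank ℝ (F i) = d i)
    (hFsum : Module.finrank ℝ ((⨆ i, F i : Submodule ℝ (EuclideanSpace ℝ (Fin n)))) =
      ∑ i, d i) :
    ∃ c : ℝ, 0 < c ∧
      ∀ B : Fin ℓ → Submodule ℝ (EuclideanSpace ℝ (Fin n)),
        (∀ i, Module.finrank ℝ (B i) = d i) →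
        Module.finrank ℝ ((⨆ i, B i : Submodule ℝ (EuclideanSpace ℝ (Fin n)))) =
          ∑ i, d i →
        ∀ Θ : Fin (∑ i, d i) → ℝ,
          CanonicalAnglesSq n (∑ i, d i) (⨆ i, F i) (⨆ i, B i) Θ →
        ∀ θ : (i : Fin ℓ) → Fin (d i) → ℝ,
          (∀ i, CanonicalAnglesSq n (d i) (F i) (B i) (θ i)) →
        Real.sin (Θ ⟨∑ i, d i - 1, by omega⟩) ≤
          c * ∑ i, Real.sin (θ i ⟨d i - 1, by have := hd i; omega⟩) := by
  obtain ⟨C, hC, hdecomp⟩ :=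
    Submodule.exists_decomposition_norm_le_of_finrank_iSup (p := F) (by simp only [hFdim, hFsum])
  refine ⟨C, hC, fun B _ _ Θ hΘ θ hθ => ?_⟩
  obtain ⟨x, hxF, hx, hfar⟩ := hΘ.exists_norm_eq_one_forall_le_norm_sub hk
  obtain ⟨f, rfl, hf⟩ := hdecomp x hxF
  choose b hbB hb using fun i => (hθ i).exists_mem_norm_sub_le (hd i) (f i).2
  calc sin (Θ ⟨∑ i, d i - 1, by omega⟩)
      ≤ ‖∑ i, (f i : EuclideanSpace ℝ (Fin n)) - ∑ i, b i‖ :=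
        hfar _ (sum_mem fun i _ => Submodule.mem_iSup_of_mem i (hbB i))
    _ ≤ ∑ i, ‖(f i : EuclideanSpace ℝ (Fin n)) - b i‖ := by
        rw [← sum_sub_distrib]
        exact norm_sum_le _ _
    _ ≤ ∑ i, C * sin (θ i ⟨d i - 1, by have := hd i; omega⟩) := by
        refine sum_le_sum fun i _ => (hb i).trans ?_
        rw [mul_comm]
        gcongr
        · exact (hθ i).sin_nonneg _
        · simpa [hx] using hf i
    _ = C * ∑ i, sin (θ i ⟨d i - 1, by have := hd i; omega⟩) := (mul_sum _ _ _).symm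
end

section
/- The only rational solution $(\eta_3,\eta_5,\eta_7,\eta_9)\in\mathbb{Q}^4$ of the system $\eta_3^2-2\eta_5^2+2\eta_5\eta_7-\eta_5\eta_9-\eta_7\eta_9+\eta_9^2=0$, $-\eta_3\eta_7-\eta_5\eta_9+\eta_7\eta_9-\eta_9^2=0$, $-\eta_3\eta_7-\eta_7^2+\eta_7\eta_9=0$, $-2\eta_5\eta_7-\eta_3\eta_9+\eta_7\eta_9=0$, $\eta_3\eta_7-2\eta_5\eta_7+\eta_5\eta_9+\eta_7\eta_9=0$ is the trivial one $(0,0,0,0)$. -/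
/-!
The equations give `η₇ * (η₉³ - 4η₉²η₇ + 2η₇³) = 0`, so `η₇ ≠ 0` would make `η₉ / η₇` a rational
root of `X³ - 4X² + 2`; once `η₇ = 0` they give `η₉ = 0` and `η₃² = 2η₅²`. Neither `X³ - 4X² + 2`
nor `X² - 2` has a rational root: by the integral root theorem it would be an integer dividing `2`.
-/

open Polynomial

theorem Polynomial.Monic.aeval_ne_zero_of_forall_dvd_coeff_zero {A K : Type*} [CommRing A]
    [IsDomain A] [UniqueFactorizationMonoid A] [Field K] [Algebra A K] [IsFractionRing A K]
    {p : A[X]} (hp : p.Monic) (h : ∀ a : A, a ∣ p.coeff 0 → p.eval a ≠ 0) (r : K) :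
    aeval r p ≠ 0 := by
  intro hr
  obtain ⟨a, rfl, ha⟩ := exists_integer_of_is_root_of_monic hp hr
  refine h a ha (IsFractionRing.injective A K ?_)
  rw [← aeval_algebraMap_apply_eq_algebraMap_eval, hr, map_zero]

lemma Int.eq_of_dvd_two {n : ℤ} (h : n ∣ 2) : n = -2 ∨ n = -1 ∨ n = 1 ∨ n = 2 := by
  have hle := Int.le_of_dvd two_pos h
  have hge : -2 ≤ n := neg_le.mp (Int.le_of_dvd two_pos (neg_dvd.mpr h))
  interval_cases n <;> simp_all

lemma Rat.sq_ne_two (q : ℚ) : q ^ 2 ≠ 2 := by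
  have hp : (X ^ 2 - 2 : ℤ[X]).Monic := by monicity!
  have h := hp.aeval_ne_zero_of_forall_dvd_coeff_zero (fun n hn ↦ ?_) q
  · simpa [map_ofNat, sub_eq_zero] using h
  rcases Int.eq_of_dvd_two (by simpa using hn) with rfl | rfl | rfl | rfl <;> simp

lemma Rat.pow_three_sub_four_mul_sq_add_two_ne_zero (q : ℚ) : q ^ 3 - 4 * q ^ 2 + 2 ≠ 0 := by
  have hp : (X ^ 3 - 4 * X ^ 2 + 2 : ℤ[X]).Monic := by monicity!
  have h := hp.aeval_ne_zero_of_forall_dvd_coeff_zero (fun n hn ↦ ?_) q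
  · simpa [map_ofNat] using h
  rcases Int.eq_of_dvd_two (by simpa using hn) with rfl | rfl | rfl | rfl <;> simp

lemma Rat.eq_zero_of_sq_eq_two_mul_sq {x y : ℚ} (h : x ^ 2 = 2 * y ^ 2) : x = 0 ∧ y = 0 := by
  have hy : y = 0 := by
    by_contra hy
    exact Rat.sq_ne_two (x / y) (by field_simp; linear_combination h)
  subst hy
  exact ⟨pow_eq_zero_iff two_ne_zero |>.mp (by linear_combination h), rfl⟩

lemma Rat.eq_zero_of_cubic_form_eq_zero {x y : ℚ}
    (h : x ^ 3 - 4 * x ^ 2 * y + 2 * y ^ 3 = 0) : x = 0 ∧ y = 0 := by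
  have hy : y = 0 := by
    by_contra hy
    exact Rat.pow_three_sub_four_mul_sq_add_two_ne_zero (x / y) (by field_simp; linear_combination h)
  subst hy
  exact ⟨pow_eq_zero_iff three_ne_zero |>.mp (by linear_combination h), rfl⟩

/-- The only rational solution `(η₃, η₅, η₇, η₉) ∈ ℚ⁴` of the system coming from
the Plücker relations in `ℝ⁵` is the trivial one `(0,0,0,0)`. -/
theorem rational_system_only_trivial_solution (η₃ η₅ η₇ η₉ : ℚ)
    (h1 : η₃ ^ 2 - 2 * η₅ ^ 2 + 2 * η₅ * η₇ - η₅ * η₉ - η₇ * η₉ + η₉ ^ 2 = 0)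
    (h2 : -(η₃ * η₇) - η₅ * η₉ + η₇ * η₉ - η₉ ^ 2 = 0)
    (h3 : -(η₃ * η₇) - η₇ ^ 2 + η₇ * η₉ = 0)
    (h4 : -(2 * η₅ * η₇) - η₃ * η₉ + η₇ * η₉ = 0)
    (h5 : η₃ * η₇ - 2 * η₅ * η₇ + η₅ * η₉ + η₇ * η₉ = 0) :
    η₃ = 0 ∧ η₅ = 0 ∧ η₇ = 0 ∧ η₉ = 0 := by
  have h₇ : η₇ = 0 := by
    have hcubic : η₇ * (η₉ ^ 3 - 4 * η₉ ^ 2 * η₇ + 2 * η₇ ^ 3) = 0 := by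
      linear_combination -(η₇ * η₉) * h4 + 2 * η₇ ^ 2 * h2 + (η₉ ^ 2 - 2 * η₇ ^ 2) * h3
    exact (mul_eq_zero.mp hcubic).elim id fun h ↦ (Rat.eq_zero_of_cubic_form_eq_zero h).2
  subst h₇
  have h₉ : η₉ = 0 := pow_eq_zero_iff two_ne_zero |>.mp (by linear_combination -h2 - h5)
  subst h₉
  obtain ⟨h₃, h₅⟩ :=
    Rat.eq_zero_of_sq_eq_two_mul_sq (x := η₃) (y := η₅) (by linear_combination h1)
  exact ⟨h₃, h₅, rfl, rfl⟩
end
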